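/- Let I' ⊆ R = 𝒪⟦X_0,…,X_m⟧ be the ideal generated by the elements X_0 − X_i − u_i·X_0·X_i (for 1 ≤ i ≤ m) and X_0·X_1⋯X_m − u·π, where the u_i are arbitrary elements of R and u is an arbitrary unit of R, and set A' = R/I'. Assume that (m+1)·1 is a unit in 𝒪 (equivalently, the residue characteristic of 𝒪 does not divide m+1). Then A' is a local ring and the ideal of A' generated by the image of X_0 + X_1 + ⋯ + X_m equals the maximal ideal of A'; in other words, the image of X_0 + X_1 + ⋯ + X_m is a uniformizer of the discrete valuation ring A'. -/

import Mathlib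

open MvPowerSeries

lemma aux_mem_span_range_X {n : ℕ} {R : Type*} [CommRing R]
    (f : MvPowerSeries (Fin n) R) (hf : constantCoeff (σ := Fin n) (R := R) f = 0) :
    f ∈ Ideal.span (Set.range (X : Fin n → MvPowerSeries (Fin n) R)) := by
  classical
  set g : Fin n → MvPowerSeries (Fin n) R :=
    fun i d => if (∀ j, j < i → d j = 0) then coeff (d + Finsupp.single i 1) f else 0 with hg
  have hcoeff : ∀ (i : Fin n) (e : Fin n →₀ ℕ), coeff e (g i)
      = if (∀ j, j < i → e j = 0) then coeff (e + Finsupp.single i 1) f else 0 := by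
    intro i e; rfl
  have key : f = ∑ i : Fin n, X i * g i := by
    ext d
    rw [map_sum]
    by_cases hd : d = 0
    · subst hd
      rw [Finset.sum_congr rfl (fun i _ => coeff_zero_X_mul (g i) i), Finset.sum_const,
        smul_zero]
      exact hf
    · have hsupp : d.support.Nonempty := Finsupp.support_nonempty_iff.mpr hd
      set i₀ := d.support.min' hsupp with hi₀
      have hmem : i₀ ∈ d.support := d.support.min'_mem hsupp
      have hterm : ∀ i : Fin n, coeff d (X i * g i)
          = if Finsupp.single i 1 ≤ d then
              (if (∀ j, j < i → ((d - Finsupp.single i 1 : Fin n →₀ ℕ)) j = 0) then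
                coeff ((d - Finsupp.single i 1) + Finsupp.single i 1) f else 0) else 0 := by
        intro i
        rw [X, coeff_monomial_mul, hcoeff]
        split <;> simp
      rw [Finset.sum_congr rfl (fun i _ => hterm i)]
      rw [Finset.sum_eq_single_of_mem i₀ (Finset.mem_univ i₀)]
      · have hle : Finsupp.single i₀ 1 ≤ d := by
          rw [Finsupp.single_le_iff]
          exact Nat.one_le_iff_ne_zero.mpr (Finsupp.mem_support_iff.mp hmem)
        rw [if_pos hle, if_pos, tsub_add_cancel_of_le hle]
        intro j hj
        have hj' : j ∉ d.support := fun hjs => absurd (d.support.min'_le j hjs) (not_le.mpr hj)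
        have : d j = 0 := Finsupp.notMem_support_iff.mp hj'
        rw [Finsupp.tsub_apply, this, Nat.zero_sub]
      · intro i _ hi
        by_cases hle : Finsupp.single i 1 ≤ d
        · rw [if_pos hle, if_neg]
          intro hall
          have himem : i ∈ d.support := by
            rw [Finsupp.mem_support_iff]
            have := Finsupp.single_le_iff.mp hle
            omega
          have hlt : i₀ < i := lt_of_le_of_ne (d.support.min'_le i himem) (by
            intro h; exact hi h.symm)
          have := hall i₀ hlt
          rw [Finsupp.tsub_apply, Finsupp.single_apply, if_neg (by exact fun h => hi h)] at this
          exact (Finsupp.mem_support_iff.mp hmem) (by omega)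
        · rw [if_neg hle]
  rw [key]
  exact Ideal.sum_mem _ fun i _ => Ideal.mul_mem_right _ _ (Ideal.subset_span ⟨i, rfl⟩)

/-- The ideal `I'` of `R = 𝒪⟦X_0, …, X_m⟧` generated by the elements
`X_0 − X_i − u_i·X_0·X_i` (for `1 ≤ i ≤ m`) and `X_0·X_1⋯X_m − u·π`. -/
noncomputable def pencilIdeal {𝒪 : Type*} [CommRing 𝒪] (π : 𝒪) (m : ℕ)
    (ui : Fin (m + 1) → MvPowerSeries (Fin (m + 1)) 𝒪)
    (u : (MvPowerSeries (Fin (m + 1)) 𝒪)ˣ) : Ideal (MvPowerSeries (Fin (m + 1)) 𝒪) :=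
  Ideal.span
    ({g | ∃ i : Fin (m + 1), i ≠ 0 ∧ g = X 0 - X i - ui i * (X 0 * X i)} ∪
      {(∏ i : Fin (m + 1), X i) - (u : MvPowerSeries (Fin (m + 1)) 𝒪) * C (σ := Fin (m + 1)) (R := 𝒪) π})

/-- If `m+1` is invertible in `𝒪`, then `A' = 𝒪⟦X_0,…,X_m⟧/I'` is a local ring and the image
of `X_0 + X_1 + ⋯ + X_m` generates its maximal ideal, i.e. it is a uniformizer of the
discrete valuation ring `A'`. -/
theorem statement3 {𝒪 : Type*} [CommRing 𝒪] [IsDomain 𝒪] [IsDiscreteValuationRing 𝒪]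
    [IsAdicComplete (IsLocalRing.maximalIdeal 𝒪) 𝒪]
    (π : 𝒪) (hπ : Ideal.span {π} = IsLocalRing.maximalIdeal 𝒪)
    (m : ℕ) (hm : 1 ≤ m)
    (ui : Fin (m + 1) → MvPowerSeries (Fin (m + 1)) 𝒪)
    (u : (MvPowerSeries (Fin (m + 1)) 𝒪)ˣ)
    (hunit : IsUnit ((m + 1 : ℕ) : 𝒪)) :
    ∃ _ : IsLocalRing (MvPowerSeries (Fin (m + 1)) 𝒪 ⧸ pencilIdeal π m ui u),
      Ideal.span
          {Ideal.Quotient.mk (pencilIdeal π m ui u) (∑ i : Fin (m + 1), X i)} =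
        IsLocalRing.maximalIdeal
          (MvPowerSeries (Fin (m + 1)) 𝒪 ⧸ pencilIdeal π m ui u) := by
  classical
  set I : Ideal (MvPowerSeries (Fin (m + 1)) 𝒪) := pencilIdeal π m ui u with hI
  -- membership criterion for the maximal ideal of (MvPowerSeries (Fin (m + 1)) 𝒪)
  have hmemA : ∀ g : (MvPowerSeries (Fin (m + 1)) 𝒪),
      constantCoeff (σ := Fin (m + 1)) (R := 𝒪) g ∈ IsLocalRing.maximalIdeal 𝒪 →
        g ∈ IsLocalRing.maximalIdeal (MvPowerSeries (Fin (m + 1)) 𝒪) := by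
    intro g hg
    rw [IsLocalRing.mem_maximalIdeal, mem_nonunits_iff]
    intro hgu
    exact (IsLocalRing.mem_maximalIdeal _).mp hg (isUnit_iff_constantCoeff.mp hgu)
  have hmemB : ∀ g : (MvPowerSeries (Fin (m + 1)) 𝒪), g ∈ IsLocalRing.maximalIdeal (MvPowerSeries (Fin (m + 1)) 𝒪) →
      constantCoeff (σ := Fin (m + 1)) (R := 𝒪) g ∈ IsLocalRing.maximalIdeal 𝒪 := by
    intro g hg
    rw [IsLocalRing.mem_maximalIdeal, mem_nonunits_iff]
    intro hc
    exact (IsLocalRing.mem_maximalIdeal _).mp hg (isUnit_iff_constantCoeff.mpr hc)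
  have hπm : π ∈ IsLocalRing.maximalIdeal 𝒪 := by
    rw [← hπ]; exact Ideal.mem_span_singleton_self π
  -- constant coefficients of the generators vanish / lie in the maximal ideal
  have hccprod : constantCoeff (σ := Fin (m + 1)) (R := 𝒪) (∏ i : Fin (m + 1), X i) = 0 := by
    rw [map_prod]
    exact Finset.prod_eq_zero (Finset.mem_univ 0) (constantCoeff_X 0)
  -- I is contained in the maximal ideal of (MvPowerSeries (Fin (m + 1)) 𝒪)
  have hIle : I ≤ IsLocalRing.maximalIdeal (MvPowerSeries (Fin (m + 1)) 𝒪) := by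
    rw [hI, pencilIdeal, Ideal.span_le]
    rintro g (⟨i, hi, rfl⟩ | hg)
    · apply hmemA
      simp [constantCoeff_X]
    · simp only [Set.mem_singleton_iff] at hg
      subst hg
      apply hmemA
      rw [map_sub, hccprod, map_mul, constantCoeff_C, zero_sub]
      exact neg_mem (Ideal.mul_mem_left _ _ hπm)
  -- the sum S
  set S : (MvPowerSeries (Fin (m + 1)) 𝒪) := ∑ i : Fin (m + 1), X i with hS
  have hSm : S ∈ IsLocalRing.maximalIdeal (MvPowerSeries (Fin (m + 1)) 𝒪) := by
    apply hmemA
    rw [map_sum]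
    simp [constantCoeff_X]
  -- the ideal J
  set J : Ideal (MvPowerSeries (Fin (m + 1)) 𝒪) := Ideal.span {S} ⊔ I with hJ
  have hSJ : S ∈ J := Ideal.mem_sup_left (Ideal.subset_span rfl)
  have hgen : ∀ i : Fin (m + 1), i ≠ 0 → X 0 - X i - ui i * (X 0 * X i) ∈ J := by
    intro i hi
    exact Ideal.mem_sup_right (Ideal.subset_span (Or.inl ⟨i, hi, rfl⟩))
  have hprodgen : (∏ i : Fin (m + 1), X i) - (u : (MvPowerSeries (Fin (m + 1)) 𝒪)) * C (σ := Fin (m + 1)) (R := 𝒪) π ∈ J :=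
    Ideal.mem_sup_right (Ideal.subset_span (Or.inr rfl))
  -- the unit w
  set E : Finset (Fin (m + 1)) := Finset.univ.erase 0 with hE
  set w : (MvPowerSeries (Fin (m + 1)) 𝒪) := ((m + 1 : ℕ) : (MvPowerSeries (Fin (m + 1)) 𝒪)) - ∑ i ∈ E, ui i * X i with hw
  have hwunit : IsUnit w := by
    rw [isUnit_iff_constantCoeff]
    have : constantCoeff (σ := Fin (m + 1)) (R := 𝒪) w = ((m + 1 : ℕ) : 𝒪) := by
      rw [hw, map_sub, map_natCast, map_sum]
      simp [constantCoeff_X]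
    rw [this]
    exact hunit
  have hcard : E.card = m := by
    rw [hE, Finset.card_erase_of_mem (Finset.mem_univ 0), Finset.card_univ, Fintype.card_fin]
    rfl
  have hX0 : (X 0 : (MvPowerSeries (Fin (m + 1)) 𝒪)) ∈ J := by
    have hkey : S + ∑ i ∈ E, (X 0 - X i - ui i * (X 0 * X i)) = X 0 * w := by
      have hS' : S = X 0 + ∑ i ∈ E, X i := (Finset.add_sum_erase _ _ (Finset.mem_univ 0)).symm
      have hsum : ∑ i ∈ E, ui i * (X 0 * X i) = X 0 * ∑ i ∈ E, ui i * X i := by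
        rw [Finset.mul_sum]
        exact Finset.sum_congr rfl fun i _ => by ring
      rw [hS', hw, Finset.sum_sub_distrib, Finset.sum_sub_distrib, Finset.sum_const, hcard,
        hsum, nsmul_eq_mul, Nat.cast_add, Nat.cast_one]
      ring
    have h1 : X 0 * w ∈ J := by
      rw [← hkey]
      exact add_mem hSJ (Ideal.sum_mem _ fun i hi => hgen i (Finset.mem_erase.mp hi).1)
    have hwinv : w * ↑hwunit.unit⁻¹ = 1 := hwunit.mul_val_inv
    have h2 := J.mul_mem_right (↑hwunit.unit⁻¹) h1
    rwa [mul_assoc, hwinv, mul_one] at h2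
  have hXi : ∀ i : Fin (m + 1), (X i : (MvPowerSeries (Fin (m + 1)) 𝒪)) ∈ J := by
    intro i
    by_cases hi : i = 0
    · subst hi; exact hX0
    · have : (X i : (MvPowerSeries (Fin (m + 1)) 𝒪)) = X 0 - (X 0 - X i - ui i * (X 0 * X i)) - ui i * (X 0 * X i) := by
        ring
      rw [this]
      exact sub_mem (sub_mem hX0 (hgen i hi))
        (Ideal.mul_mem_left _ _ (J.mul_mem_right _ hX0))
  have hprodJ : (∏ i : Fin (m + 1), X i) ∈ J := by
    rw [← Finset.mul_prod_erase _ _ (Finset.mem_univ 0)]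
    exact J.mul_mem_right _ hX0
  have hCπ : C (σ := Fin (m + 1)) (R := 𝒪) π ∈ J := by
    have h3 : (u : (MvPowerSeries (Fin (m + 1)) 𝒪)) * C (σ := Fin (m + 1)) (R := 𝒪) π ∈ J := by
      have : (u : (MvPowerSeries (Fin (m + 1)) 𝒪)) * C (σ := Fin (m + 1)) (R := 𝒪) π
          = (∏ i : Fin (m + 1), X i) - ((∏ i : Fin (m + 1), X i) - (u : MvPowerSeries (Fin (m + 1)) 𝒪) * C (σ := Fin (m + 1)) (R := 𝒪) π) := by
        ring
      rw [this]
      exact sub_mem hprodJ hprodgen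
    have h4 := J.mul_mem_left (↑u⁻¹) h3
    rwa [← mul_assoc, Units.inv_mul, one_mul] at h4
  -- J is the maximal ideal of (MvPowerSeries (Fin (m + 1)) 𝒪)
  have hJeq : J = IsLocalRing.maximalIdeal (MvPowerSeries (Fin (m + 1)) 𝒪) := by
    apply le_antisymm
    · rw [hJ, sup_le_iff]
      refine ⟨?_, hIle⟩
      rw [Ideal.span_le, Set.singleton_subset_iff]
      exact hSm
    · intro f hf
      have hcf := hmemB f hf
      rw [← hπ, Ideal.mem_span_singleton'] at hcf
      obtain ⟨c, hc⟩ := hcf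
      have hdecomp : f = C (σ := Fin (m + 1)) (R := 𝒪) (c * π) + (f - C (σ := Fin (m + 1)) (R := 𝒪) (c * π)) := by
        ring
      rw [hdecomp]
      refine add_mem ?_ ?_
      · rw [map_mul]
        exact Ideal.mul_mem_left _ _ hCπ
      · have h0 : constantCoeff (σ := Fin (m + 1)) (R := 𝒪) (f - C (σ := Fin (m + 1)) (R := 𝒪) (c * π)) = 0 := by
          rw [map_sub, constantCoeff_C, hc, sub_self]
        have := aux_mem_span_range_X _ h0
        refine Ideal.span_le.mpr ?_ this
        rintro g ⟨i, rfl⟩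
        exact hXi i
  -- the quotient is local
  have hInetop : I ≠ ⊤ := fun h => by
    rw [h] at hIle
    exact (IsLocalRing.maximalIdeal.isMaximal (MvPowerSeries (Fin (m + 1)) 𝒪)).ne_top (top_le_iff.mp hIle)
  have : Nontrivial ((MvPowerSeries (Fin (m + 1)) 𝒪) ⧸ I) := Ideal.Quotient.nontrivial_iff.mpr hInetop
  have hloc : IsLocalRing ((MvPowerSeries (Fin (m + 1)) 𝒪) ⧸ I) :=
    IsLocalRing.of_surjective' (Ideal.Quotient.mk I) Ideal.Quotient.mk_surjective
  refine ⟨hloc, ?_⟩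
  -- maximal ideal of quotient = image of maximal ideal of (MvPowerSeries (Fin (m + 1)) 𝒪)
  have hmax : Ideal.map (Ideal.Quotient.mk I) (IsLocalRing.maximalIdeal (MvPowerSeries (Fin (m + 1)) 𝒪))
      = IsLocalRing.maximalIdeal ((MvPowerSeries (Fin (m + 1)) 𝒪) ⧸ I) := by
    apply le_antisymm
    · apply IsLocalRing.le_maximalIdeal
      intro htop
      have := Ideal.comap_map_of_surjective (Ideal.Quotient.mk I)
        Ideal.Quotient.mk_surjective (IsLocalRing.maximalIdeal (MvPowerSeries (Fin (m + 1)) 𝒪))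
      rw [htop, Ideal.comap_top] at this
      have h5 : IsLocalRing.maximalIdeal (MvPowerSeries (Fin (m + 1)) 𝒪) ⊔ Ideal.comap (Ideal.Quotient.mk I) ⊥
          = IsLocalRing.maximalIdeal (MvPowerSeries (Fin (m + 1)) 𝒪) := by
        rw [← RingHom.ker_eq_comap_bot, Ideal.mk_ker]
        exact sup_eq_left.mpr hIle
      rw [h5] at this
      exact (IsLocalRing.maximalIdeal.isMaximal (MvPowerSeries (Fin (m + 1)) 𝒪)).ne_top this.symm
    · intro z hz
      obtain ⟨x, rfl⟩ := Ideal.Quotient.mk_surjective z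
      by_cases hx : x ∈ IsLocalRing.maximalIdeal (MvPowerSeries (Fin (m + 1)) 𝒪)
      · exact Ideal.mem_map_of_mem _ hx
      · exfalso
        have hxu : IsUnit x := by
          by_contra hxu
          exact hx ((IsLocalRing.mem_maximalIdeal x).mpr hxu)
        exact (IsLocalRing.mem_maximalIdeal _).mp hz (hxu.map (Ideal.Quotient.mk I))
  rw [← hmax, ← hJeq, hJ, Ideal.map_sup, Ideal.map_quotient_self, sup_bot_eq,
    Ideal.map_span, Set.image_singleton]
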